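/- Let K be a complex Hilbert space (not necessarily separable) and let A ⊆ B(K) be a norm-separable subalgebra containing the identity operator. If every separable closed subspace of K that is invariant under A reduces A, then A is reductive, i.e., every closed subspace of K invariant under A reduces A. -/
import Mathlib


open Filter Topology TopologicalSpace

noncomputable section

/-- The (closed) subspace `M` is invariant under the set of operators `S`. -/
def InvariantUnder {K : Type*} [NormedAddCommGroup K] [InnerProductSpace ℂ K]
    (S : Set (K →L[ℂ] K)) (M : Submodule ℂ K) : Prop :=
  ∀ T ∈ S, ∀ x ∈ M, T x ∈ M

/-- The subspace `M` reduces the set of operators `S`. -/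
def ReducesSet {K : Type*} [NormedAddCommGroup K] [InnerProductSpace ℂ K]
    (S : Set (K →L[ℂ] K)) (M : Submodule ℂ K) : Prop :=
  InvariantUnder S M ∧ InvariantUnder S Mᗮ

theorem stmt14 {K : Type*} [NormedAddCommGroup K] [InnerProductSpace ℂ K] [CompleteSpace K]
    (A : Subalgebra ℂ (K →L[ℂ] K)) (hsep : IsSeparable (A : Set (K →L[ℂ] K)))
    (h : ∀ M : Submodule ℂ K, IsClosed (M : Set K) → IsSeparable (M : Set K) →
      InvariantUnder (A : Set (K →L[ℂ] K)) M → ReducesSet (A : Set (K →L[ℂ] K)) M) :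
    ∀ M : Submodule ℂ K, IsClosed (M : Set K) →
      InvariantUnder (A : Set (K →L[ℂ] K)) M → ReducesSet (A : Set (K →L[ℂ] K)) M := by
  intro M hMcl hMinv
  refine ⟨hMinv, ?_⟩
  intro T hT x hx
  rw [Submodule.mem_orthogonal]
  intro m hm
  -- the evaluation map at m
  set ev : (K →L[ℂ] K) →ₗ[ℂ] K :=
    { toFun := fun S => S m
      map_add' := fun S₁ S₂ => rfl
      map_smul' := fun c S => rfl } with hev
  have hev_cont : Continuous (fun S : K →L[ℂ] K => S m) := by
    have : Continuous (fun S : K →L[ℂ] K => S m) :=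
      (ContinuousLinearMap.apply ℂ K m).continuous
    exact this
  set N₀ : Submodule ℂ K := (Subalgebra.toSubmodule A).map ev with hN₀
  set N : Submodule ℂ K := N₀.topologicalClosure with hN
  have hN₀coe : (N₀ : Set K) = (fun S : K →L[ℂ] K => S m) '' (A : Set (K →L[ℂ] K)) := by
    ext y
    simp [hN₀, Submodule.mem_map, hev, Set.mem_image]
  have hNsep : IsSeparable (N : Set K) := by
    have h1 : IsSeparable (N₀ : Set K) := by
      rw [hN₀coe]
      exact hsep.image hev_cont
    have : (N : Set K) = closure (N₀ : Set K) := rfl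
    rw [this]
    exact h1.closure
  have hNcl : IsClosed (N : Set K) := N₀.isClosed_topologicalClosure
  have hN₀inv : InvariantUnder (A : Set (K →L[ℂ] K)) N₀ := by
    intro S hS y hy
    rcases Submodule.mem_map.mp hy with ⟨R, hR, rfl⟩
    refine Submodule.mem_map.mpr ⟨S * R, ?_, rfl⟩
    exact (Subalgebra.mem_toSubmodule A).mpr (A.mul_mem hS ((Subalgebra.mem_toSubmodule A).mp hR))
  have hNinv : InvariantUnder (A : Set (K →L[ℂ] K)) N := by
    intro S hS y hy
    have hy' : y ∈ closure (N₀ : Set K) := hy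
    have : S y ∈ closure (N₀ : Set K) :=
      map_mem_closure S.continuous hy' (fun z hz => hN₀inv S hS z hz)
    exact this
  have hNM : N ≤ M := by
    apply Submodule.topologicalClosure_minimal
    · intro y hy
      rcases Submodule.mem_map.mp hy with ⟨R, hR, rfl⟩
      exact hMinv R ((Subalgebra.mem_toSubmodule A).mp hR) m hm
    · exact hMcl
  have hmN : m ∈ N := by
    have h1 : m ∈ N₀ := Submodule.mem_map.mpr ⟨1, (Subalgebra.mem_toSubmodule A).mpr A.one_mem, rfl⟩
    exact N₀.le_topologicalClosure h1
  have hred := h N hNcl hNsep hNinv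
  have hxN : x ∈ Nᗮ := Submodule.orthogonal_le hNM hx
  have hTx : T x ∈ Nᗮ := hred.2 T hT x hxN
  exact (Submodule.mem_orthogonal _ _).mp hTx m hmN
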